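/- Let Θ be the closed unit ball of ℝ^d and suppose the landscape assumptions hold with constants S, μ, α, r > 0 and unique global minimizer θ_0* of F. Suppose F̂_n : Θ → ℝ is a δ-approximation of F with δ < min{μ, r, α/4}. Then there exist constants C, c > 0 (depending only on d, α, r, S and δ, and not on β) such that for every β ≥ c·r^{−2}, the Gibbs measure π_β satisfies π_β(Θ \ B_r(θ_0*)) ≤ C·β^d·exp(−β·α/2); equivalently, log π_β(Θ \ B_r(θ_0*)) ≤ −β·α/2 + d·log β + log C. -/

import Mathlib

/-!
Off `B_r(θ0)` the Gibbs density `exp (-β F̂)` is at most `exp (-β (F θ0 + α - δ))`. Since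
`∇F θ0 = 0` and `‖∇²F‖ ≤ S`, on a small ball `B_ρ(θ0)` we have `F ≤ F θ0 + S ρ²`, so the density
is at least `exp (-β (F θ0 + S ρ² + δ))` there. Comparing the mass outside `B_r(θ0)` with the mass
of `B_ρ(θ0)` bounds the ratio by `vol Θ / vol B_ρ · exp (-β (α - 2δ - S ρ²))`, and `ρ` is chosen
with `S ρ² ≤ α / 2 - 2δ`, independently of `θ0`, `F`, `F̂` and `β`.
-/

open MeasureTheory
open scoped RealInnerProductSpace

noncomputable section

/-- The closed unit ball of `ℝ^d`, the parameter domain. -/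
def unitDomain (d : ℕ) : Set (EuclideanSpace ℝ (Fin d)) := Metric.closedBall 0 1

/-- The Hessian of `F`, as the Fréchet derivative of the gradient. -/
def hess {d : ℕ} (F : EuclideanSpace ℝ (Fin d) → ℝ) (θ : EuclideanSpace ℝ (Fin d)) :
    EuclideanSpace ℝ (Fin d) →L[ℝ] EuclideanSpace ℝ (Fin d) :=
  fderiv ℝ (gradient F) θ

/-- `F̂` is a `δ`-approximation of `F` on the closed unit ball `Θ` of `ℝ^d`: the values,
gradients and Hessians (in operator norm) are uniformly `δ`-close on `Θ`, and `F` and `F̂`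
have the same number `K+1` of stationary points (interior points of `Θ` with vanishing
gradient), which can be paired so that corresponding ones are `δ`-close. -/
def IsDeltaApprox {d : ℕ} (F Fhat : EuclideanSpace ℝ (Fin d) → ℝ) (δ : ℝ) : Prop :=
  (∀ θ ∈ unitDomain d, |F θ - Fhat θ| ≤ δ) ∧
  (∀ θ ∈ unitDomain d, ‖gradient F θ - gradient Fhat θ‖ ≤ δ) ∧
  (∀ θ ∈ unitDomain d, ‖hess F θ - hess Fhat θ‖ ≤ δ) ∧
  ∃ (K : ℕ) (s shat : Fin (K + 1) → EuclideanSpace ℝ (Fin d)),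
    Function.Injective s ∧ Function.Injective shat ∧
    Set.range s = {θ | θ ∈ Metric.ball (0 : EuclideanSpace ℝ (Fin d)) 1 ∧
      gradient F θ = 0} ∧
    Set.range shat = {θ | θ ∈ Metric.ball (0 : EuclideanSpace ℝ (Fin d)) 1 ∧
      gradient Fhat θ = 0} ∧
    ∀ i, ‖s i - shat i‖ ≤ δ

section Gradient

variable {E : Type*} [NormedAddCommGroup E] [InnerProductSpace ℝ E] [CompleteSpace E]
  {F : E → ℝ}

theorem norm_gradient_eq_norm_fderiv (F : E → ℝ) (x : E) : ‖gradient F x‖ = ‖fderiv ℝ F x‖ :=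
  (InnerProductSpace.toDual ℝ E).symm.norm_map _

theorem IsLocalMin.gradient_eq_zero {θ : E} (h : IsLocalMin F θ) : gradient F θ = 0 := by
  simp [gradient, h.fderiv_eq_zero]

theorem ContDiff.differentiable_gradient (hF : ContDiff ℝ 2 F) :
    Differentiable ℝ (gradient F) :=
  ((InnerProductSpace.toDual ℝ E).symm.contDiff.comp
    (hF.fderiv_right (m := 1) (by norm_num))).differentiable one_ne_zero

theorem abs_sub_le_of_gradient_eq_zero_of_norm_fderiv_gradient_le {θ₀ θ : E} {ρ S : ℝ}
    (hF : Differentiable ℝ F) (hg : Differentiable ℝ (gradient F)) (h₀ : gradient F θ₀ = 0)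
    (hS : ∀ x ∈ Metric.closedBall θ₀ ρ, ‖fderiv ℝ (gradient F) x‖ ≤ S)
    (hθ : θ ∈ Metric.closedBall θ₀ ρ) :
    |F θ - F θ₀| ≤ S * ρ ^ 2 := by
  have hρ : 0 ≤ ρ := Metric.nonempty_closedBall.mp ⟨θ, hθ⟩
  have hθ₀ : θ₀ ∈ Metric.closedBall θ₀ ρ := Metric.mem_closedBall_self hρ
  have hS₀ : 0 ≤ S := (norm_nonneg _).trans (hS θ₀ hθ₀)
  have hgrad : ∀ x ∈ Metric.closedBall θ₀ ρ, ‖fderiv ℝ F x‖ ≤ S * ρ := by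
    intro x hx
    rw [← norm_gradient_eq_norm_fderiv]
    calc ‖gradient F x‖ = ‖gradient F x - gradient F θ₀‖ := by rw [h₀, sub_zero]
      _ ≤ S * ‖x - θ₀‖ := (convex_closedBall θ₀ ρ).norm_image_sub_le_of_norm_fderiv_le
          (fun y _ => hg y) hS hθ₀ hx
      _ ≤ S * ρ := by gcongr; exact mem_closedBall_iff_norm.mp hx
  calc |F θ - F θ₀| ≤ S * ρ * ‖θ - θ₀‖ :=
        (convex_closedBall θ₀ ρ).norm_image_sub_le_of_norm_fderiv_le
          (fun y _ => hF y) hgrad hθ₀ hθ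
    _ ≤ S * ρ * ρ := by gcongr; exact mem_closedBall_iff_norm.mp hθ
    _ = S * ρ ^ 2 := by ring

end Gradient

section GibbsRatio

variable {X : Type*} [MeasurableSpace X] {ν : Measure X} {Θ A B : Set X}

theorem setIntegral_div_setIntegral_le {g : X → ℝ} {a b : ℝ} (hg : ∀ x, 0 ≤ g x)
    (hA : A ⊆ Θ) (hB : B ⊆ Θ) (hBm : MeasurableSet B) (hΘ : ν Θ ≠ ⊤) (hB₀ : ν B ≠ 0)
    (ha : 0 ≤ a) (hb : 0 < b) (hgA : ∀ x ∈ A, g x ≤ a) (hgB : ∀ x ∈ B, b ≤ g x) :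
    (∫ x in A, g x ∂ν) / (∫ x in Θ, g x ∂ν) ≤ a * ν.real Θ / (b * ν.real B) := by
  by_cases hint : IntegrableOn g Θ ν
  swap
  · rw [integral_undef hint, div_zero]
    positivity
  have hBfin : ν B ≠ ⊤ := ne_top_of_le_ne_top hΘ (measure_mono hB)
  have hnum : ∫ x in A, g x ∂ν ≤ a * ν.real Θ :=
    calc ∫ x in A, g x ∂ν ≤ ‖∫ x in A, g x ∂ν‖ := Real.le_norm_self _
      _ ≤ a * ν.real A := norm_setIntegral_le_of_norm_le_const
          ((measure_mono hA).trans_lt hΘ.lt_top)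
          (fun x hx => by rw [Real.norm_of_nonneg (hg x)]; exact hgA x hx)
      _ ≤ a * ν.real Θ := by gcongr
  have hden : b * ν.real B ≤ ∫ x in Θ, g x ∂ν :=
    calc b * ν.real B ≤ ∫ x in B, g x ∂ν :=
          setIntegral_ge_of_const_le_real hBm hBfin hgB (hint.mono_set hB)
      _ ≤ ∫ x in Θ, g x ∂ν :=
          setIntegral_mono_set hint (Filter.Eventually.of_forall hg) hB.eventuallyLE
  have hBpos : 0 < ν.real B := ENNReal.toReal_pos hB₀ hBfin
  exact div_le_div₀ (by positivity) hnum (by positivity) hden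

theorem setIntegral_exp_div_setIntegral_exp_le {f : X → ℝ} {β a b : ℝ} (hβ : 0 ≤ β)
    (hA : A ⊆ Θ) (hB : B ⊆ Θ) (hBm : MeasurableSet B) (hΘ : ν Θ ≠ ⊤) (hB₀ : ν B ≠ 0)
    (hfA : ∀ x ∈ A, a ≤ f x) (hfB : ∀ x ∈ B, f x ≤ b) :
    (∫ x in A, Real.exp (-(β * f x)) ∂ν) / (∫ x in Θ, Real.exp (-(β * f x)) ∂ν) ≤
      ν.real Θ / ν.real B * Real.exp (-(β * (a - b))) := by
  refine (setIntegral_div_setIntegral_le (fun _ => (Real.exp_pos _).le) hA hB hBm hΘ hB₀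
    (Real.exp_pos (-(β * a))).le (Real.exp_pos (-(β * b)))
    (fun x hx => Real.exp_le_exp.mpr ?_) (fun x hx => Real.exp_le_exp.mpr ?_)).trans_eq ?_
  · nlinarith [hfA x hx]
  · nlinarith [hfB x hx]
  · rw [mul_div_mul_comm, ← Real.exp_sub, mul_comm]
    ring_nf

end GibbsRatio

theorem exists_pos_le_and_mul_sq_le {S r q : ℝ} (hS : 0 < S) (hr : 0 < r) (hq : 0 < q) :
    ∃ ρ > 0, ρ ≤ r ∧ S * ρ ^ 2 ≤ q := by
  refine ⟨min r √(q / S), lt_min hr (by positivity), min_le_left _ _, ?_⟩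
  calc S * min r √(q / S) ^ 2 ≤ S * √(q / S) ^ 2 := by gcongr; exact min_le_right _ _
    _ = q := by rw [Real.sq_sqrt (by positivity)]; field_simp

theorem stmt_4_general (d : ℕ) (S μ α r δ : ℝ)
    (hS : 0 < S) (hr : 0 < r)
    (hδ : δ < min μ (min r (α / 4))) :
    ∃ C > 0, ∃ c > 0, ∀ β : ℝ, c / r ^ 2 ≤ β →
      ∀ (F Fhat : EuclideanSpace ℝ (Fin d) → ℝ) (θ0 : EuclideanSpace ℝ (Fin d)),
        ContDiff ℝ 2 F →
        (∀ θ ∈ unitDomain d, ‖hess F θ‖ ≤ S) →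
        θ0 ∈ unitDomain d →
        (∀ θ ∈ unitDomain d, θ ≠ θ0 → F θ0 < F θ) →
        Metric.closedBall θ0 r ⊆ unitDomain d →
        (∀ θ ∈ Metric.closedBall θ0 r, ∀ v, μ * ‖v‖ ^ 2 ≤ ⟪v, hess F θ v⟫) →
        (∀ θ ∈ unitDomain d, θ ∉ Metric.closedBall θ0 r → F θ0 + α ≤ F θ) →
        IsDeltaApprox F Fhat δ →
        (∫ θ in unitDomain d \ Metric.closedBall θ0 r, Real.exp (-(β * Fhat θ))) /
            (∫ θ in unitDomain d, Real.exp (-(β * Fhat θ))) ≤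
          C * β ^ d * Real.exp (-(β * α / 2)) := by
  have hδα : δ < α / 4 := hδ.trans_le ((min_le_right _ _).trans (min_le_right _ _))
  obtain ⟨ρ, hρ, hρr, hSρ⟩ := exists_pos_le_and_mul_sq_le hS hr (by linarith : 0 < α / 2 - 2 * δ)
  set V : ℝ → ℝ := fun R => volume.real (Metric.closedBall (0 : EuclideanSpace ℝ (Fin d)) R)
  have hV : ∀ R > 0, 0 < V R := fun R hR =>
    ENNReal.toReal_pos (Metric.measure_closedBall_pos _ _ hR).ne' measure_closedBall_lt_top.ne
  refine ⟨V 1 / V ρ, div_pos (hV 1 one_pos) (hV ρ hρ), r ^ 2, by positivity, ?_⟩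
  intro β hβ F Fhat θ0 hF hHess _ hmin hball _ hgap happrox
  have hβ : 1 ≤ β := by rwa [div_self (by positivity)] at hβ
  have hBρ : Metric.closedBall θ0 ρ ⊆ unitDomain d :=
    (Metric.closedBall_subset_closedBall hρr).trans hball
  have hmin_loc : IsLocalMin F θ0 := IsMinOn.isLocalMin
    (fun θ hθ => (eq_or_ne θ θ0).elim (fun h => (congrArg F h).ge) fun h => (hmin θ hθ h).le)
    (Filter.mem_of_superset (Metric.closedBall_mem_nhds θ0 hr) hball)
  have hnear : ∀ θ ∈ Metric.closedBall θ0 ρ, Fhat θ ≤ F θ0 + S * ρ ^ 2 + δ := fun θ hθ => by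
    have hFθ := abs_sub_le_of_gradient_eq_zero_of_norm_fderiv_gradient_le
      (hF.differentiable (by norm_num)) hF.differentiable_gradient hmin_loc.gradient_eq_zero
      (fun x hx => hHess x (hBρ hx)) hθ
    have hFhat := happrox.1 θ (hBρ hθ)
    rw [abs_le] at hFθ hFhat
    linarith
  have hfar : ∀ θ ∈ unitDomain d \ Metric.closedBall θ0 r, F θ0 + α - δ ≤ Fhat θ :=
    fun θ hθ => by linarith [hgap θ hθ.1 hθ.2, (abs_le.mp (happrox.1 θ hθ.1)).2]
  have hVρ : volume.real (Metric.closedBall θ0 ρ) = V ρ := by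
    simp only [V, measureReal_def, Measure.addHaar_closedBall_center]
  calc _ ≤ V 1 / V ρ * Real.exp (-(β * (F θ0 + α - δ - (F θ0 + S * ρ ^ 2 + δ)))) := by
        rw [← hVρ]
        exact setIntegral_exp_div_setIntegral_exp_le (by linarith) Set.sdiff_subset hBρ
          measurableSet_closedBall measure_closedBall_lt_top.ne
          (Metric.measure_closedBall_pos _ _ hρ).ne' hfar hnear
    _ ≤ V 1 / V ρ * (1 * Real.exp (-(β * α / 2))) := by
        gcongr; rw [one_mul, Real.exp_le_exp]; nlinarith
    _ ≤ V 1 / V ρ * β ^ d * Real.exp (-(β * α / 2)) := by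
        rw [mul_assoc]; gcongr; exact one_le_pow₀ hβ

/-- Under the landscape assumptions (Hessian bounded by `S` on `Θ`, unique
global minimizer `θ0` with `B_r(θ0) ⊆ Θ`, `μ`-strong convexity on `B_r(θ0)`, gap `α`
outside `B_r(θ0)`), if `F̂` is a `δ`-approximation of `F` with `δ < min{μ, r, α/4}`, then
there are constants `C, c > 0` (depending only on `d, α, r, S, δ` — in particular not on
`β`) such that for every `β ≥ c·r⁻²` the Gibbs measure `π_β` of `F̂` on `Θ` satisfies
`π_β(Θ \ B_r(θ0)) ≤ C·β^d·exp(−βα/2)`. -/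
theorem stmt_4 (d : ℕ) (hd : 0 < d) (S μ α r δ : ℝ)
    (hS : 0 < S) (hμ : 0 < μ) (hα : 0 < α) (hr : 0 < r)
    (hδ : δ < min μ (min r (α / 4))) :
    ∃ C > 0, ∃ c > 0, ∀ β : ℝ, c / r ^ 2 ≤ β →
      ∀ (F Fhat : EuclideanSpace ℝ (Fin d) → ℝ) (θ0 : EuclideanSpace ℝ (Fin d)),
        ContDiff ℝ 2 F →
        (∀ θ ∈ unitDomain d, ‖hess F θ‖ ≤ S) →
        θ0 ∈ unitDomain d →
        (∀ θ ∈ unitDomain d, θ ≠ θ0 → F θ0 < F θ) →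
        Metric.closedBall θ0 r ⊆ unitDomain d →
        (∀ θ ∈ Metric.closedBall θ0 r, ∀ v, μ * ‖v‖ ^ 2 ≤ ⟪v, hess F θ v⟫) →
        (∀ θ ∈ unitDomain d, θ ∉ Metric.closedBall θ0 r → F θ0 + α ≤ F θ) →
        IsDeltaApprox F Fhat δ →
        (∫ θ in unitDomain d \ Metric.closedBall θ0 r, Real.exp (-(β * Fhat θ))) /
            (∫ θ in unitDomain d, Real.exp (-(β * Fhat θ))) ≤
          C * β ^ d * Real.exp (-(β * α / 2)) :=
  stmt_4_general d S μ α r δ hS hr hδ
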